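/- arXiv:2410.07616 — 7 statements merged into one kernel-verified Lean document; each statement's English description precedes it below -/
import Mathlib

section
/- Let P be a row-stochastic matrix indexed by a finite set S and let γ ∈ [0,1). Then (I − γP)^{-1}(I − P) = I − Q, where Q = (1−γ)·Σ_{t=0}^∞ γ^t P^{t+1} is itself a row-stochastic matrix (its entries are nonnegative and each row sums to 1). -/
/-- For a row-stochastic matrix `P` and `γ ∈ [0,1)`,
`(I − γP)⁻¹ (I − P) = I − Q` where `Q = (1−γ) Σₜ γ^t P^(t+1)` is row-stochastic. -/
theorem resolvent_stochastic_identity {S : Type*} [Fintype S] [DecidableEq S]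
    (P : Matrix S S ℝ) (γ : ℝ)
    (hP0 : ∀ s s', 0 ≤ P s s') (hP1 : ∀ s, ∑ s', P s s' = 1)
    (hγ : γ ∈ Set.Ico (0 : ℝ) 1) :
    let Q : Matrix S S ℝ := Matrix.of fun s s' => (1 - γ) * ∑' t : ℕ, γ ^ t * (P ^ (t + 1)) s s'
    (∀ s s', 0 ≤ Q s s') ∧ (∀ s, ∑ s', Q s s' = 1) ∧
      (1 - γ • P)⁻¹ * (1 - P) = 1 - Q := by
  obtain ⟨hγ0, hγ1⟩ := hγ
  intro Q
  -- powers are entrywise nonneg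
  have hpow0 : ∀ (t : ℕ) (s s' : S), 0 ≤ (P ^ t) s s' := by
    intro t
    induction t with
    | zero => intro s s'; simp [Matrix.one_apply]; positivity
    | succ n ih =>
      intro s s'
      rw [pow_succ, Matrix.mul_apply]
      exact Finset.sum_nonneg fun k _ => mul_nonneg (ih s k) (hP0 k s')
  -- powers have row sums 1
  have hpow1 : ∀ (t : ℕ) (s : S), ∑ s', (P ^ t) s s' = 1 := by
    intro t
    induction t with
    | zero => intro s; simp [Matrix.one_apply]
    | succ n ih =>
      intro s
      simp only [pow_succ, Matrix.mul_apply]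
      rw [Finset.sum_comm]
      simp_rw [← Finset.mul_sum, hP1, mul_one]
      exact ih s
  have hle1 : ∀ (t : ℕ) (s s' : S), (P ^ t) s s' ≤ 1 := by
    intro t s s'
    calc (P ^ t) s s' ≤ ∑ s'', (P ^ t) s s'' :=
          Finset.single_le_sum (fun k _ => hpow0 t s k) (Finset.mem_univ s')
      _ = 1 := hpow1 t s
  have hgeo : Summable (fun t : ℕ => γ ^ t) := summable_geometric_of_lt_one hγ0 hγ1
  have hsumN : ∀ s s', Summable (fun t : ℕ => γ ^ t * (P ^ t) s s') := by
    intro s s'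
    refine Summable.of_nonneg_of_le (fun t => mul_nonneg (pow_nonneg hγ0 t) (hpow0 t s s'))
      (fun t => ?_) hgeo
    calc γ ^ t * (P ^ t) s s' ≤ γ ^ t * 1 :=
          mul_le_mul_of_nonneg_left (hle1 t s s') (pow_nonneg hγ0 t)
      _ = γ ^ t := mul_one _
  have hsumM : ∀ s s', Summable (fun t : ℕ => γ ^ t * (P ^ (t + 1)) s s') := by
    intro s s'
    refine Summable.of_nonneg_of_le (fun t => mul_nonneg (pow_nonneg hγ0 t) (hpow0 _ s s'))
      (fun t => ?_) hgeo
    calc γ ^ t * (P ^ (t + 1)) s s' ≤ γ ^ t * 1 :=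
          mul_le_mul_of_nonneg_left (hle1 _ s s') (pow_nonneg hγ0 t)
      _ = γ ^ t := mul_one _
  set N : Matrix S S ℝ := Matrix.of fun s s' => ∑' t : ℕ, γ ^ t * (P ^ t) s s' with hNdef
  set M : Matrix S S ℝ := Matrix.of fun s s' => ∑' t : ℕ, γ ^ t * (P ^ (t + 1)) s s' with hMdef
  -- N = 1 + γ • M
  have hN1 : N = 1 + γ • M := by
    ext s s'
    have h0 := Summable.tsum_eq_zero_add (hsumN s s')
    simp only [hNdef, hMdef, Matrix.of_apply, Matrix.add_apply, Matrix.smul_apply, smul_eq_mul]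
    rw [h0]
    simp only [pow_zero, pow_succ', one_mul, mul_assoc]
    rw [tsum_mul_left]
  -- P * N = M
  have hPN : P * N = M := by
    ext s s'
    rw [Matrix.mul_apply]
    simp only [hNdef, hMdef, Matrix.of_apply]
    calc ∑ k, P s k * ∑' t : ℕ, γ ^ t * (P ^ t) k s'
        = ∑ k, ∑' t : ℕ, P s k * (γ ^ t * (P ^ t) k s') := by
          simp_rw [tsum_mul_left]
      _ = ∑' t : ℕ, ∑ k, P s k * (γ ^ t * (P ^ t) k s') :=
          (Summable.tsum_finsetSum (fun k _ => ((hsumN k s').mul_left (P s k)))).symm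
      _ = ∑' t : ℕ, γ ^ t * (P ^ (t + 1)) s s' := by
          refine tsum_congr fun t => ?_
          rw [pow_succ', Matrix.mul_apply, Finset.mul_sum]
          refine Finset.sum_congr rfl fun k _ => by ring
  -- N * P = M
  have hNP : N * P = M := by
    ext s s'
    rw [Matrix.mul_apply]
    simp only [hNdef, hMdef, Matrix.of_apply]
    calc ∑ k, (∑' t : ℕ, γ ^ t * (P ^ t) s k) * P k s'
        = ∑ k, ∑' t : ℕ, (γ ^ t * (P ^ t) s k) * P k s' := by
          simp_rw [tsum_mul_right]
      _ = ∑' t : ℕ, ∑ k, (γ ^ t * (P ^ t) s k) * P k s' :=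
          (Summable.tsum_finsetSum (fun k _ => ((hsumN s k).mul_right (P k s')))).symm
      _ = ∑' t : ℕ, γ ^ t * (P ^ (t + 1)) s s' := by
          refine tsum_congr fun t => ?_
          rw [pow_succ, Matrix.mul_apply, Finset.mul_sum]
          refine Finset.sum_congr rfl fun k _ => by ring
  have key1 : (1 - γ • P) * N = 1 := by
    rw [sub_mul, one_mul, Matrix.smul_mul, hPN]
    nth_rewrite 1 [hN1]
    abel
  have hinv : (1 - γ • P)⁻¹ = N := Matrix.inv_eq_right_inv key1
  refine ⟨?_, ?_, ?_⟩
  · intro s s'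
    exact mul_nonneg (by linarith)
      (tsum_nonneg fun t => mul_nonneg (pow_nonneg hγ0 t) (hpow0 _ s s'))
  · intro s
    simp only [Q, Matrix.of_apply]
    rw [← Finset.mul_sum, ← Summable.tsum_finsetSum (fun s' _ => hsumM s s')]
    have : ∀ t : ℕ, ∑ s', γ ^ t * (P ^ (t + 1)) s s' = γ ^ t := by
      intro t; rw [← Finset.mul_sum, hpow1, mul_one]
    simp_rw [this]
    rw [tsum_geometric_of_lt_one hγ0 hγ1]
    rw [mul_inv_cancel₀ (by linarith : (1:ℝ) - γ ≠ 0)]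
  · rw [hinv, mul_sub, mul_one, hNP, hN1]
    ext s s'
    simp only [Q, Matrix.sub_apply, Matrix.add_apply, Matrix.smul_apply, Matrix.of_apply,
      Matrix.one_apply, hMdef, smul_eq_mul]
    ring
end

section
/- Let P : S×A → Δ(S) be a transition kernel on finite sets S, A, let r : S×A → ℝ, let η ∈ (0,1], let s₀ ∈ S, and define the anchored kernel P̃(·|s,a) = (1-η)P(·|s,a) + η·δ_{s₀}. Define the Bellman operator T̃(h)(s) = max_a [r(s,a) + Σ_{s'} P̃(s'|s,a) h(s')]. Then T̃ is a (1−η)-contraction in the span seminorm: span(T̃(h) − T̃(h')) ≤ (1−η)·span(h − h') for all h, h' ∈ ℝ^S. -/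
private lemma sup_sub_sup_le' {ι : Type*} [Fintype ι] [Nonempty ι] (f g : ι → ℝ) :
    (⨆ i, f i) - (⨆ i, g i) ≤ ⨆ i, (f i - g i) := by
  rw [sub_le_iff_le_add]
  apply ciSup_le
  intro i
  have h1 : f i - g i ≤ ⨆ j, (f j - g j) :=
    le_ciSup (f := fun j => f j - g j) (Set.Finite.bddAbove (Set.finite_range _)) i
  have h2 : g i ≤ ⨆ j, g j := le_ciSup (Set.Finite.bddAbove (Set.finite_range _)) i
  linarith

private lemma inf_le_sup_sub_sup' {ι : Type*} [Fintype ι] [Nonempty ι] (f g : ι → ℝ) :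
    (⨅ i, (f i - g i)) ≤ (⨆ i, f i) - (⨆ i, g i) := by
  obtain ⟨i, hi⟩ := Finite.exists_max g
  have hg : (⨆ j, g j) = g i := le_antisymm (ciSup_le hi)
    (le_ciSup (Set.Finite.bddAbove (Set.finite_range _)) i)
  have h1 : (⨅ j, (f j - g j)) ≤ f i - g i :=
    ciInf_le (f := fun j => f j - g j) (Set.Finite.bddBelow (Set.finite_range _)) i
  have h2 : f i ≤ ⨆ j, f j := le_ciSup (Set.Finite.bddAbove (Set.finite_range _)) i
  rw [hg]
  linarith

/-- The Bellman optimality operator of the anchored kernel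
`P̃(·|s,a) = (1-η)P(·|s,a) + η δ_{s₀}` is a `(1−η)`-contraction in the span seminorm. -/
theorem anchored_bellman_span_contraction {S A : Type*} [Fintype S] [Fintype A]
    [Nonempty S] [Nonempty A] [DecidableEq S]
    (P : S → A → S → ℝ) (r : S → A → ℝ) (η : ℝ) (s₀ : S)
    (hP0 : ∀ s a s', 0 ≤ P s a s') (hP1 : ∀ s a, ∑ s', P s a s' = 1)
    (hη : η ∈ Set.Ioc (0 : ℝ) 1) (h h' : S → ℝ) :
    let Pt : S → A → S → ℝ := fun s a s' => (1 - η) * P s a s' + η * (if s' = s₀ then 1 else 0)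
    let T : (S → ℝ) → S → ℝ := fun g s => ⨆ a, (r s a + ∑ s', Pt s a s' * g s')
    (⨆ s, (T h s - T h' s)) - (⨅ s, (T h s - T h' s)) ≤
      (1 - η) * ((⨆ s, (h s - h' s)) - (⨅ s, (h s - h' s))) := by
  intro Pt T
  set d : S → ℝ := fun s => h s - h' s with hd
  set M : ℝ := ⨆ s, d s with hM
  set m : ℝ := ⨅ s, d s with hm
  have hdM : ∀ s, d s ≤ M := fun s => le_ciSup (Set.Finite.bddAbove (Set.finite_range _)) s
  have hmd : ∀ s, m ≤ d s := fun s => ciInf_le (Set.Finite.bddBelow (Set.finite_range _)) s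
  -- key: per (s,a) the difference of the summands equals Σ Pt * d, bounded in [(1-η)m+η d s₀, (1-η)M+η d s₀]
  have key : ∀ s a, (r s a + ∑ s', Pt s a s' * h s') - (r s a + ∑ s', Pt s a s' * h' s')
      = (1 - η) * (∑ s', P s a s' * d s') + η * d s₀ := by
    intro s a
    have : (r s a + ∑ s', Pt s a s' * h s') - (r s a + ∑ s', Pt s a s' * h' s')
        = ∑ s', Pt s a s' * d s' := by
      simp only [d, mul_sub]
      rw [Finset.sum_sub_distrib]
      ring
    rw [this]
    simp only [Pt]
    rw [Finset.sum_congr rfl (fun s' _ => by ring :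
      ∀ s' ∈ Finset.univ, ((1 - η) * P s a s' + η * (if s' = s₀ then 1 else 0)) * d s'
        = (1 - η) * (P s a s' * d s') + η * ((if s' = s₀ then 1 else 0) * d s'))]
    rw [Finset.sum_add_distrib, ← Finset.mul_sum, ← Finset.mul_sum]
    congr 1
    congr 1
    simp [Finset.sum_ite_eq', Finset.mem_univ]
  have hsumM : ∀ s a, (∑ s', P s a s' * d s') ≤ M := by
    intro s a
    calc (∑ s', P s a s' * d s') ≤ ∑ s', P s a s' * M := by
          apply Finset.sum_le_sum
          intro s' _
          exact mul_le_mul_of_nonneg_left (hdM s') (hP0 s a s')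
      _ = M := by rw [← Finset.sum_mul, hP1, one_mul]
  have hsumm : ∀ s a, m ≤ (∑ s', P s a s' * d s') := by
    intro s a
    calc m = ∑ s', P s a s' * m := by rw [← Finset.sum_mul, hP1, one_mul]
      _ ≤ ∑ s', P s a s' * d s' := by
          apply Finset.sum_le_sum
          intro s' _
          exact mul_le_mul_of_nonneg_left (hmd s') (hP0 s a s')
  have hη1 : (0:ℝ) ≤ 1 - η := by linarith [hη.2]
  -- upper bound on T h s - T h' s
  have hub : ∀ s, T h s - T h' s ≤ (1 - η) * M + η * d s₀ := by
    intro s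
    refine le_trans (sup_sub_sup_le' _ _) (ciSup_le fun a => ?_)
    rw [key s a]
    have := hsumM s a
    nlinarith
  have hlb : ∀ s, (1 - η) * m + η * d s₀ ≤ T h s - T h' s := by
    intro s
    refine le_trans ?_ (inf_le_sup_sub_sup' _ _)
    refine le_ciInf fun a => ?_
    rw [key s a]
    have := hsumm s a
    nlinarith
  have h1 : (⨆ s, (T h s - T h' s)) ≤ (1 - η) * M + η * d s₀ := ciSup_le hub
  have h2 : (1 - η) * m + η * d s₀ ≤ ⨅ s, (T h s - T h' s) := le_ciInf hlb
  linarith [h1, h2]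
end

section
/- Let P_π and P̂_π be two row-stochastic matrices on a finite state space with limiting (Cesàro-limit) matrices P_π^∞ and P̂_π^∞ satisfying P̂_π^∞ P̂_π = P̂_π^∞, P_π^∞ P_π = P_π P_π^∞ = P_π^∞, and P̂_π^∞ 1 = P_π^∞ 1 = 1. Suppose ρ^π := P_π^∞ r_π is a constant vector (all entries equal) and h^π satisfies the Poisson equation ρ^π + h^π = r_π + P_π h^π. Then P̂_π^∞ r_π − P_π^∞ r_π = P̂_π^∞ (P̂_π − P_π) h^π. -/
/-- Average-reward simulation lemma: if `ρ^π = P_π^∞ r_π` is constant and `h^π` solves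
the Poisson equation, then `P̂_π^∞ r_π − P_π^∞ r_π = P̂_π^∞ (P̂_π − P_π) h^π`. -/
theorem average_reward_simulation {S : Type*} [Fintype S]
    (Pπ Phatπ Pinf Phatinf : Matrix S S ℝ) (rπ hπ : S → ℝ) (c : ℝ)
    (hPinf0 : ∀ s s', 0 ≤ Pinf s s') (hPhatinf0 : ∀ s s', 0 ≤ Phatinf s s')
    (hPhatlim : Phatinf * Phatπ = Phatinf)
    (hPlim : Pinf * Pπ = Pinf) (hPlim' : Pπ * Pinf = Pinf)
    (hPhatone : Phatinf.mulVec (fun _ => (1 : ℝ)) = fun _ => 1)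
    (hPone : Pinf.mulVec (fun _ => (1 : ℝ)) = fun _ => 1)
    (hconst : Pinf.mulVec rπ = fun _ => c)
    (hPoisson : Pinf.mulVec rπ + hπ = rπ + Pπ.mulVec hπ) :
    Phatinf.mulVec rπ - Pinf.mulVec rπ = Phatinf.mulVec ((Phatπ - Pπ).mulVec hπ) := by
  have key : Phatinf.mulVec (Pinf.mulVec rπ) = Pinf.mulVec rπ := by
    rw [hconst]
    have hc : (fun _ => c : S → ℝ) = c • (fun _ => (1 : ℝ)) := by
      funext s; simp
    rw [hc, Matrix.mulVec_smul, hPhatone]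
  have hh : Phatinf.mulVec hπ = Phatinf.mulVec (Phatπ.mulVec hπ) := by
    rw [Matrix.mulVec_mulVec, hPhatlim]
  have hr : rπ = Pinf.mulVec rπ + hπ - Pπ.mulVec hπ := eq_sub_of_add_eq hPoisson.symm
  calc Phatinf.mulVec rπ - Pinf.mulVec rπ
      = Phatinf.mulVec (Pinf.mulVec rπ + hπ - Pπ.mulVec hπ) - Pinf.mulVec rπ := by
        rw [← hr]
    _ = Phatinf.mulVec ((Phatπ - Pπ).mulVec hπ) := by
        rw [Matrix.mulVec_sub, Matrix.mulVec_add, key, hh, Matrix.sub_mulVec,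
          Matrix.mulVec_sub]
        abel
end

section
/- Let P_π be a row-stochastic matrix on a finite state space S, η ∈ (0,1], s₀ ∈ S, and let P̃_π = (1-η)P_π + η·1·e_{s₀}ᵀ be the anchored matrix. Then the matrix P̃_π^∞ := η·1·e_{s₀}ᵀ·(I − (1-η)P_π)^{-1} is row-stochastic and satisfies P̃_π^∞ · P̃_π = P̃_π^∞ = P̃_π · P̃_π^∞. -/
attribute [local instance] Matrix.linftyOpNormedRing Matrix.linftyOpNormedSpace

private lemma entry_nnnorm_le {S : Type*} [Fintype S] [DecidableEq S]
    (M : Matrix S S ℝ) (i j : S) : ‖M i j‖₊ ≤ ‖M‖₊ := by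
  rw [Matrix.linfty_opNNNorm_def]
  calc ‖M i j‖₊ ≤ ∑ k, ‖M i k‖₊ :=
        Finset.single_le_sum (f := fun k => ‖M i k‖₊) (fun k _ => zero_le)
          (Finset.mem_univ j)
    _ ≤ _ := Finset.le_sup (f := fun i => ∑ k, ‖M i k‖₊) (Finset.mem_univ i)

/-- entrywise evaluation as a continuous linear map -/
private noncomputable def entryCLM {S : Type*} [Fintype S] [DecidableEq S] (i j : S) :
    Matrix S S ℝ →L[ℝ] ℝ :=
  LinearMap.mkContinuous
    { toFun := fun M => M i j
      map_add' := fun _ _ => rfl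
      map_smul' := fun _ _ => rfl } 1
    (fun M => by show ‖M i j‖ ≤ 1 * ‖M‖; simpa using (NNReal.coe_le_coe.mpr (entry_nnnorm_le M i j)))

/-- The matrix `P̃_π^∞ = η·𝟙 e_{s₀}ᵀ (I − (1-η)P_π)⁻¹` is row-stochastic and is the
limiting matrix of the anchored chain `P̃_π = (1-η)P_π + η·𝟙 e_{s₀}ᵀ`. -/
theorem anchored_limiting_matrix {S : Type*} [Fintype S] [DecidableEq S]
    (Pπ : Matrix S S ℝ) (η : ℝ) (s₀ : S)
    (hP0 : ∀ s s', 0 ≤ Pπ s s') (hP1 : ∀ s, ∑ s', Pπ s s' = 1)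
    (hη : η ∈ Set.Ioc (0 : ℝ) 1) :
    let E : Matrix S S ℝ := Matrix.of fun (_ s' : S) => if s' = s₀ then (1 : ℝ) else 0
    let Pt : Matrix S S ℝ := (1 - η) • Pπ + η • E
    let Ptinf : Matrix S S ℝ := η • (E * (1 - (1 - η) • Pπ)⁻¹)
    (∀ s s', 0 ≤ Ptinf s s') ∧ (∀ s, ∑ s', Ptinf s s' = 1) ∧
      Ptinf * Pt = Ptinf ∧ Pt * Ptinf = Ptinf := by
  intro E Pt Ptinf
  obtain ⟨hη0, hη1⟩ := hη
  have hηne : η ≠ 0 := ne_of_gt hη0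
  have h1η : (0:ℝ) ≤ 1 - η := by linarith
  set x : Matrix S S ℝ := (1 - η) • Pπ with hxdef
  have hxapp : ∀ i j, x i j = (1 - η) * Pπ i j := fun i j => by
    rw [hxdef]; simp [Matrix.smul_apply]
  -- norm bound
  have hPn : ‖Pπ‖₊ ≤ 1 := by
    rw [Matrix.linfty_opNNNorm_def]
    refine Finset.sup_le fun i _ => ?_
    have h : ((∑ j, ‖Pπ i j‖₊ : NNReal) : ℝ) = 1 := by
      push_cast
      rw [← hP1 i]
      exact Finset.sum_congr rfl fun j _ => by
        rw [Real.norm_eq_abs, abs_of_nonneg (hP0 i j)]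
    exact le_of_eq (by exact_mod_cast h)
  have hx : ‖x‖ < 1 := by
    have h1 : ‖x‖ ≤ (1 - η) * ‖Pπ‖ := by
      rw [hxdef, norm_smul, Real.norm_eq_abs, abs_of_nonneg h1η]
    have h2 : ‖Pπ‖ ≤ 1 := hPn
    nlinarith [norm_nonneg Pπ]
  -- the inverse as a geometric series
  have hs : Summable fun n : ℕ => x ^ n := summable_geometric_of_norm_lt_one hx
  have hU : IsUnit (1 - x) := isUnit_one_sub_of_norm_lt_one hx
  have hdet : IsUnit (1 - x).det := (Matrix.isUnit_iff_isUnit_det _).mp hU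
  have hA2 : (1 - x)⁻¹ * (1 - x) = 1 := Matrix.nonsing_inv_mul _ hdet
  have hinv : (1 - x)⁻¹ = ∑' n : ℕ, x ^ n := by
    rw [Matrix.nonsing_inv_eq_ringInverse, ← geom_series_eq_inverse x hx]
    rfl
  -- nonnegativity of inverse entries
  have hxnn : ∀ n : ℕ, ∀ i j, 0 ≤ (x ^ n) i j := by
    intro n
    induction n with
    | zero => intro i j; by_cases h : i = j <;> simp [Matrix.one_apply, h]
    | succ n ih =>
      intro i j
      rw [pow_succ, Matrix.mul_apply]
      refine Finset.sum_nonneg fun k _ => mul_nonneg (ih i k) ?_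
      rw [hxapp]
      exact mul_nonneg h1η (hP0 k j)
  have hinv_nn : ∀ i j, 0 ≤ (1 - x)⁻¹ i j := by
    intro i j
    have hmap : HasSum (fun n : ℕ => (x ^ n) i j) ((∑' n : ℕ, x ^ n) i j) := by
      have := (entryCLM (S := S) i j).hasSum hs.hasSum
      exact this
    rw [hinv, ← hmap.tsum_eq]
    exact tsum_nonneg fun n => hxnn n i j
  -- basic algebraic identities
  have hEE : E * E = E := by
    ext i j
    simp only [Matrix.mul_apply, E, Matrix.of_apply]
    rcases eq_or_ne j s₀ with h | h <;>
      simp [h, Finset.sum_ite_eq', mul_ite, mul_one, mul_zero, ite_mul, one_mul, zero_mul]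
  have hAE : (1 - x) * E = η • E := by
    ext i j
    have h1 : ∑ k, (1 : Matrix S S ℝ) i k = 1 := by simp [Matrix.one_apply]
    have h2 : ∑ k, x i k = 1 - η := by
      simp_rw [hxapp, ← Finset.mul_sum, hP1 i, mul_one]
    simp only [Matrix.mul_apply, Matrix.smul_apply, E, Matrix.of_apply, smul_eq_mul]
    rcases eq_or_ne j s₀ with h | h <;>
      simp [h, mul_ite, mul_one, mul_zero, Matrix.sub_apply, Finset.sum_sub_distrib,
        h1, h2]
  have hinvE : (1 - x)⁻¹ * E = η⁻¹ • E := by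
    have h : E = η • ((1 - x)⁻¹ * E) := by
      calc E = 1 * E := (one_mul E).symm
        _ = ((1 - x)⁻¹ * (1 - x)) * E := by rw [hA2]
        _ = (1 - x)⁻¹ * ((1 - x) * E) := mul_assoc _ _ _
        _ = (1 - x)⁻¹ * (η • E) := by rw [hAE]
        _ = η • ((1 - x)⁻¹ * E) := mul_smul_comm _ _ _
    calc (1 - x)⁻¹ * E = η⁻¹ • (η • ((1 - x)⁻¹ * E)) := by
          rw [smul_smul, inv_mul_cancel₀ hηne, one_smul]
      _ = η⁻¹ • E := by rw [← h]
  have hxE : x * E = (1 - η) • E := by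
    have h : x * E = E - (1 - x) * E := by
      rw [sub_mul, one_mul, sub_sub_cancel]
    rw [h, hAE, sub_smul, one_smul]
  have hentry : ∀ s s', Ptinf s s' = η * (1 - x)⁻¹ s₀ s' := by
    intro s s'
    show (η • (E * (1 - x)⁻¹)) s s' = _
    simp only [Matrix.smul_apply, smul_eq_mul, Matrix.mul_apply, E, Matrix.of_apply,
      ite_mul, one_mul, zero_mul]
    rw [Finset.sum_ite_eq' Finset.univ s₀ fun k => (1 - x)⁻¹ k s']
    simp
  refine ⟨?_, ?_, ?_, ?_⟩
  · -- nonneg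
    intro s s'
    rw [hentry]
    exact mul_nonneg (le_of_lt hη0) (hinv_nn s₀ s')
  · -- row sums
    intro s
    have hrowinv : ∑ k, (1 - x)⁻¹ s₀ k = η⁻¹ := by
      have h := congrFun (congrFun hinvE s₀) s₀
      simpa [Matrix.mul_apply, E, Matrix.smul_apply, mul_ite, mul_one, mul_zero] using h
    simp_rw [hentry, ← Finset.mul_sum, hrowinv, mul_inv_cancel₀ hηne]
  · -- Ptinf * Pt = Ptinf
    show η • (E * (1 - x)⁻¹) * (x + η • E) = η • (E * (1 - x)⁻¹)
    have h1 : E * (1 - x)⁻¹ * x = E * (1 - x)⁻¹ - E := by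
      have hi : E * (1 - x)⁻¹ * (1 - x) = E := by
        rw [mul_assoc, hA2, mul_one]
      calc E * (1 - x)⁻¹ * x
          = E * (1 - x)⁻¹ * (1 - (1 - x)) := by rw [sub_sub_cancel]
        _ = E * (1 - x)⁻¹ * 1 - E * (1 - x)⁻¹ * (1 - x) := by rw [mul_sub]
        _ = E * (1 - x)⁻¹ - E := by rw [hi, mul_one]
    have h2 : E * (1 - x)⁻¹ * (η • E) = E := by
      rw [mul_smul_comm, mul_assoc, hinvE, mul_smul_comm, hEE,
        smul_smul, mul_inv_cancel₀ hηne, one_smul]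
    calc η • (E * (1 - x)⁻¹) * (x + η • E)
        = η • (E * (1 - x)⁻¹ * x + E * (1 - x)⁻¹ * (η • E)) := by
          rw [smul_mul_assoc, mul_add]
      _ = η • (E * (1 - x)⁻¹ - E + E) := by rw [h1, h2]
      _ = η • (E * (1 - x)⁻¹) := by rw [sub_add_cancel]
  · -- Pt * Ptinf = Ptinf
    show (x + η • E) * (η • (E * (1 - x)⁻¹)) = η • (E * (1 - x)⁻¹)
    have h3 : x * (E * (1 - x)⁻¹) = (1 - η) • (E * (1 - x)⁻¹) := by
      rw [← mul_assoc, hxE, smul_mul_assoc]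
    have h4 : (η • E) * (E * (1 - x)⁻¹) = η • (E * (1 - x)⁻¹) := by
      rw [smul_mul_assoc, ← mul_assoc, hEE]
    calc (x + η • E) * (η • (E * (1 - x)⁻¹))
        = η • (x * (E * (1 - x)⁻¹) + (η • E) * (E * (1 - x)⁻¹)) := by
          rw [mul_smul_comm, add_mul]
      _ = η • ((1 - η) • (E * (1 - x)⁻¹) + η • (E * (1 - x)⁻¹)) := by rw [h3, h4]
      _ = η • (E * (1 - x)⁻¹) := by rw [← add_smul, sub_add_cancel, one_smul]
end

section
/- Let P_π be a row-stochastic matrix on finite S with r_π ∈ [0,1]^S, suppose ρ^π := P_π^∞ r_π is a constant vector, and let h^π satisfy ρ^π + h^π = r_π + P_π h^π. Let γ = 1−η ∈ (0,1) and V^π_γ = (I − γP_π)^{-1} r_π. Then span(V^π_γ) ≤ 2·span(h^π), where span(v) = max v − min v. -/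
/-- If the gain `ρ` is a constant vector, `h` solves the Poisson equation, rewards lie
in `[0,1]` and `γ ∈ (0,1)`, then the span of the discounted value function
`V = (I − γP)⁻¹ r` is at most twice the span of the bias `h`. -/
theorem span_discounted_le_two_span_bias {S : Type*} [Fintype S] [Nonempty S] [DecidableEq S]
    (P : Matrix S S ℝ) (r ρ h : S → ℝ) (γ c : ℝ)
    (hP0 : ∀ s s', 0 ≤ P s s') (hP1 : ∀ s, ∑ s', P s s' = 1)
    (hr : ∀ s, r s ∈ Set.Icc (0 : ℝ) 1)
    (hγ : γ ∈ Set.Ioo (0 : ℝ) 1)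
    (hρc : ρ = fun _ => c)
    (hρfix : P.mulVec ρ = ρ)
    (hPoisson : ρ + h = r + P.mulVec h) :
    let V : S → ℝ := ((1 - γ • P)⁻¹).mulVec r
    (⨆ s, V s) - (⨅ s, V s) ≤ 2 * ((⨆ s, h s) - (⨅ s, h s)) := by
  intro V
  obtain ⟨hγ0, hγ1⟩ := hγ
  have hη : (0:ℝ) < 1 - γ := by linarith
  -- invertibility
  have hdet : IsUnit (1 - γ • P).det := by
    rw [isUnit_iff_ne_zero]
    intro h0
    obtain ⟨v, hv0, hv⟩ := (Matrix.exists_mulVec_eq_zero_iff).mpr h0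
    obtain ⟨s, hs⟩ := Finite.exists_max (fun s => |v s|)
    have hvpos : 0 < |v s| := by
      obtain ⟨t, ht⟩ := Function.ne_iff.mp hv0
      exact lt_of_lt_of_le (abs_pos.mpr ht) (hs t)
    have hvs : v s = γ * (P.mulVec v) s := by
      have := congrFun hv s
      simp [Matrix.sub_mulVec, Matrix.smul_mulVec, Matrix.one_mulVec, sub_eq_zero] at this
      simpa using this
    have hb : |(P.mulVec v) s| ≤ |v s| := by
      calc |(P.mulVec v) s| = |∑ s', P s s' * v s'| := by simp [Matrix.mulVec, dotProduct]
        _ ≤ ∑ s', |P s s' * v s'| := Finset.abs_sum_le_sum_abs _ _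
        _ ≤ ∑ s', P s s' * |v s| := by
            apply Finset.sum_le_sum
            intro i _
            rw [abs_mul, abs_of_nonneg (hP0 s i)]
            exact mul_le_mul_of_nonneg_left (hs i) (hP0 s i)
        _ = |v s| := by rw [← Finset.sum_mul, hP1, one_mul]
    have : |v s| < |v s| := by
      calc |v s| = γ * |(P.mulVec v) s| := by rw [hvs, abs_mul, abs_of_pos hγ0]
        _ ≤ γ * |v s| := by nlinarith
        _ < |v s| := by nlinarith
    exact lt_irrefl _ this
  have hVeq : ∀ s, V s = r s + γ * ∑ s', P s s' * V s' := by
    have h1 : (1 - γ • P).mulVec V = r := by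
      show (1 - γ • P).mulVec (((1 - γ • P)⁻¹).mulVec r) = r
      rw [Matrix.mulVec_mulVec, Matrix.mul_nonsing_inv _ hdet, Matrix.one_mulVec]
    intro s
    have h5 := congrFun h1 s
    rw [Matrix.sub_mulVec, Matrix.smul_mulVec] at h5
    simp only [Pi.sub_apply, Pi.smul_apply, smul_eq_mul, Matrix.one_mulVec] at h5
    have hPV : (P.mulVec V) s = ∑ s', P s s' * V s' := by simp [Matrix.mulVec, dotProduct]
    rw [hPV] at h5
    linarith
  have hPois : ∀ s, c + h s = r s + ∑ s', P s s' * h s' := by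
    intro s
    have := congrFun hPoisson s
    simp [hρc, Matrix.mulVec, dotProduct] at this
    simpa using this
  set u : S → ℝ := fun s => V s - c / (1 - γ) - h s with hu
  have hueq : ∀ s, u s = γ * (∑ s', P s s' * u s') - (1 - γ) * ∑ s', P s s' * h s' := by
    intro s
    have e1 : ∑ s', P s s' * u s'
        = (∑ s', P s s' * V s') - c / (1 - γ) - ∑ s', P s s' * h s' := by
      simp only [hu, mul_sub]
      rw [Finset.sum_sub_distrib, Finset.sum_sub_distrib, ← Finset.sum_mul, hP1, one_mul]
    rw [e1]
    have h2 := hVeq s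
    have h3 := hPois s
    have : u s = V s - c / (1 - γ) - h s := rfl
    rw [this, h2]
    have hr2 : r s = c + h s - ∑ s', P s s' * h s' := by linarith
    rw [hr2]
    field_simp
    ring
  -- bounds on u
  have hbdd : BddAbove (Set.range h) := Set.Finite.bddAbove (Set.finite_range h)
  have hbddb : BddBelow (Set.range h) := Set.Finite.bddBelow (Set.finite_range h)
  have hPh_le : ∀ s, ∑ s', P s s' * h s' ≤ ⨆ t, h t := by
    intro s
    calc ∑ s', P s s' * h s' ≤ ∑ s', P s s' * (⨆ t, h t) := by
          apply Finset.sum_le_sum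
          intro i _
          exact mul_le_mul_of_nonneg_left (le_ciSup hbdd i) (hP0 s i)
      _ = ⨆ t, h t := by rw [← Finset.sum_mul, hP1, one_mul]
  have hPh_ge : ∀ s, (⨅ t, h t) ≤ ∑ s', P s s' * h s' := by
    intro s
    calc (⨅ t, h t) = ∑ s', P s s' * (⨅ t, h t) := by rw [← Finset.sum_mul, hP1, one_mul]
      _ ≤ ∑ s', P s s' * h s' := by
          apply Finset.sum_le_sum
          intro i _
          exact mul_le_mul_of_nonneg_left (ciInf_le hbddb i) (hP0 s i)
  have hu_le : ∀ s, u s ≤ -(⨅ t, h t) := by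
    obtain ⟨s₀, hs₀⟩ := Finite.exists_max u
    have key : u s₀ ≤ -(⨅ t, h t) := by
      have h1 := hueq s₀
      have h2 : ∑ s', P s₀ s' * u s' ≤ u s₀ := by
        calc ∑ s', P s₀ s' * u s' ≤ ∑ s', P s₀ s' * u s₀ :=
              Finset.sum_le_sum (fun i _ => mul_le_mul_of_nonneg_left (hs₀ i) (hP0 s₀ i))
          _ = u s₀ := by rw [← Finset.sum_mul, hP1, one_mul]
      have h3 := hPh_ge s₀
      nlinarith
    exact fun s => le_trans (hs₀ s) key
  have hu_ge : ∀ s, -(⨆ t, h t) ≤ u s := by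
    obtain ⟨s₁, hs₁⟩ := Finite.exists_min u
    have key : -(⨆ t, h t) ≤ u s₁ := by
      have h1 := hueq s₁
      have h2 : u s₁ ≤ ∑ s', P s₁ s' * u s' := by
        calc u s₁ = ∑ s', P s₁ s' * u s₁ := by rw [← Finset.sum_mul, hP1, one_mul]
          _ ≤ ∑ s', P s₁ s' * u s' :=
              Finset.sum_le_sum (fun i _ => mul_le_mul_of_nonneg_left (hs₁ i) (hP0 s₁ i))
      have h3 := hPh_le s₁
      nlinarith
    exact fun s => le_trans key (hs₁ s)
  -- combine
  have hVform : ∀ s, V s = u s + h s + c / (1 - γ) := by intro s; simp [hu]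
  have hsupV : (⨆ s, V s) ≤ -(⨅ t, h t) + (⨆ t, h t) + c / (1 - γ) := by
    apply ciSup_le
    intro s
    rw [hVform s]
    exact add_le_add_left (add_le_add (hu_le s) (le_ciSup hbdd s)) _
  have hinfV : -(⨆ t, h t) + (⨅ t, h t) + c / (1 - γ) ≤ (⨅ s, V s) := by
    apply le_ciInf
    intro s
    rw [hVform s]
    exact add_le_add_left (add_le_add (hu_ge s) (ciInf_le hbddb s)) _
  linarith
end

section
/- Let P be a row-stochastic matrix on finite S and γ ∈ (0,1). Then for any vector x : S → ℝ with nonnegative entries, ‖(I − γP)^{-1}√x‖_∞ ≤ (1/√(1−γ))·√(‖(I − γP)^{-1}x‖_∞), where √x denotes the entrywise square root. -/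
open scoped BigOperators

attribute [local instance] Matrix.linftyOpNormedRing

section Aux

variable {S : Type*} [Fintype S] [DecidableEq S]

theorem resolvent_aux (P : Matrix S S ℝ) (γ : ℝ)
    (hP0 : ∀ s s', 0 ≤ P s s') (hP1 : ∀ s, ∑ s', P s s' = 1)
    (hγ : γ ∈ Set.Ioo (0 : ℝ) 1) :
    (∀ i j, 0 ≤ (1 - γ • P)⁻¹ i j) ∧ (∀ i, ∑ j, (1 - γ • P)⁻¹ i j = (1 - γ)⁻¹) := by
  obtain ⟨hγ0, hγ1⟩ := hγ
  set A : Matrix S S ℝ := γ • P with hA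
  have hApos : ∀ i j, 0 ≤ A i j := fun i j => mul_nonneg hγ0.le (hP0 i j)
  have hArow : ∀ i, ∑ j, A i j = γ := fun i => by
    simp [hA, Matrix.smul_apply, ← Finset.mul_sum, hP1 i, smul_eq_mul]
  have hpow : ∀ n, (∀ i j, 0 ≤ (A ^ n) i j) ∧ (∀ i, ∑ j, (A ^ n) i j = γ ^ n) := by
    intro n
    induction n with
    | zero =>
      refine ⟨fun i j => ?_, fun i => ?_⟩
      · rw [pow_zero]
        by_cases h : i = j <;> simp [Matrix.one_apply, h]
      · simp [Matrix.one_apply]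
    | succ n ih =>
      refine ⟨fun i j => ?_, fun i => ?_⟩
      · rw [pow_succ', Matrix.mul_apply]
        exact Finset.sum_nonneg fun k _ => mul_nonneg (hApos i k) (ih.1 k j)
      · rw [pow_succ']
        simp_rw [Matrix.mul_apply]
        rw [Finset.sum_comm]
        calc ∑ k, ∑ j, A i k * (A ^ n) k j
            = ∑ k, A i k * γ ^ n := by
              refine Finset.sum_congr rfl fun k _ => ?_
              rw [← Finset.mul_sum, ih.2 k]
          _ = γ ^ (n + 1) := by rw [← Finset.sum_mul, hArow i, pow_succ']
  have hAnorm : ‖A‖ < 1 := by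
    rw [Matrix.linfty_opNorm_def]
    have hle : ((Finset.univ : Finset S).sup fun i : S => ∑ j : S, ‖A i j‖₊) ≤ γ.toNNReal := by
      refine Finset.sup_le fun i _ => ?_
      have h1 : ∑ j : S, ‖A i j‖₊ = ((∑ j, A i j : ℝ).toNNReal) := by
        rw [Real.toNNReal_sum_of_nonneg fun j _ => hApos i j]
        refine Finset.sum_congr rfl fun j _ => ?_
        simp [Real.nnnorm_of_nonneg (hApos i j), Real.toNNReal_of_nonneg (hApos i j)]
      rw [h1, hArow i]
    calc ((Finset.univ.sup fun i : S => ∑ j : S, ‖A i j‖₊ : NNReal) : ℝ)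
        ≤ (γ.toNNReal : ℝ) := by exact_mod_cast hle
      _ = γ := Real.coe_toNNReal γ hγ0.le
      _ < 1 := hγ1
  letI : NormedSpace ℝ (Matrix S S ℝ) := Matrix.linftyOpNormedSpace
  haveI : CompleteSpace (Matrix S S ℝ) := FiniteDimensional.complete ℝ (Matrix S S ℝ)
  have hsummable : Summable fun n : ℕ => A ^ n := summable_geometric_of_norm_lt_one hAnorm
  set Q : Matrix S S ℝ := ∑' n : ℕ, A ^ n with hQ
  have hQsum : HasSum (fun n : ℕ => A ^ n) Q := hsummable.hasSum
  have hinv : (1 - A)⁻¹ = Q := Matrix.inv_eq_right_inv (mul_neg_geom_series A hAnorm)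
  have hentry : ∀ i j, HasSum (fun n : ℕ => (A ^ n) i j) (Q i j) := by
    intro i j
    exact hQsum.map
      ({ toFun := fun M => M i j
         map_add' := fun M N => rfl
         map_smul' := fun c M => rfl } : Matrix S S ℝ →ₗ[ℝ] ℝ)
      (LinearMap.continuous_of_finiteDimensional _)
  constructor
  · intro i j
    rw [hinv]
    exact hasSum_le (fun n => (hpow n).1 i j) hasSum_zero (hentry i j)
  · intro i
    rw [hinv]
    have h1 : HasSum (fun n : ℕ => ∑ j, (A ^ n) i j) (∑ j, Q i j) :=
      hasSum_sum fun j _ => hentry i j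
    have h2 : HasSum (fun n : ℕ => γ ^ n) (∑ j, Q i j) := by
      convert h1 using 2 with n
      exact ((hpow n).2 i).symm
    exact h2.unique (hasSum_geometric_of_lt_one hγ0.le hγ1)

end Aux

/-- Jensen for the resolvent: for a row-stochastic `P`, `γ ∈ (0,1)` and nonnegative `x`,
`‖(I − γP)⁻¹ √x‖_∞ ≤ (1/√(1−γ))·√‖(I − γP)⁻¹ x‖_∞`. -/
theorem resolvent_sqrt_jensen {S : Type*} [Fintype S] [DecidableEq S]
    (P : Matrix S S ℝ) (γ : ℝ) (x : S → ℝ)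
    (hP0 : ∀ s s', 0 ≤ P s s') (hP1 : ∀ s, ∑ s', P s s' = 1)
    (hγ : γ ∈ Set.Ioo (0 : ℝ) 1) (hx : ∀ s, 0 ≤ x s) :
    ‖((1 - γ • P)⁻¹).mulVec (fun s => Real.sqrt (x s))‖ ≤
      (1 / Real.sqrt (1 - γ)) * Real.sqrt ‖((1 - γ • P)⁻¹).mulVec x‖ := by
  obtain ⟨hQ0, hQrow⟩ := resolvent_aux P γ hP0 hP1 hγ
  obtain ⟨hγ0, hγ1⟩ := hγ
  set Q := (1 - γ • P)⁻¹ with hQdef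
  have h1γ : (0:ℝ) < 1 - γ := by linarith
  have hmv : ∀ (v : S → ℝ) i, Q.mulVec v i = ∑ j, Q i j * v j := fun v i => by
    simp [Matrix.mulVec, dotProduct]
  have hQx_nonneg : ∀ i, 0 ≤ Q.mulVec x i := fun i => by
    rw [hmv]
    exact Finset.sum_nonneg fun j _ => mul_nonneg (hQ0 i j) (hx j)
  have hQx_le : ∀ i, Q.mulVec x i ≤ ‖Q.mulVec x‖ := fun i =>
    (le_abs_self _).trans ((Real.norm_eq_abs _) ▸ norm_le_pi_norm (Q.mulVec x) i)
  have hRHS0 : 0 ≤ (1 / Real.sqrt (1 - γ)) * Real.sqrt ‖Q.mulVec x‖ := by positivity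
  rw [pi_norm_le_iff_of_nonneg hRHS0]
  intro i
  have hL0 : 0 ≤ ∑ j, Q i j * Real.sqrt (x j) :=
    Finset.sum_nonneg fun j _ => mul_nonneg (hQ0 i j) (Real.sqrt_nonneg _)
  have key : ∑ j, Q i j * Real.sqrt (x j) ≤
      (1 / Real.sqrt (1 - γ)) * Real.sqrt (Q.mulVec x i) := by
    have hCS : (∑ j, Q i j * Real.sqrt (x j)) ^ 2 ≤
        (∑ j, Q i j) * ∑ j, Q i j * x j := by
      refine Finset.sum_sq_le_sum_mul_sum_of_sq_eq_mul Finset.univ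
        (fun j _ => hQ0 i j) (fun j _ => mul_nonneg (hQ0 i j) (hx j)) (fun j _ => ?_)
      rw [mul_pow, Real.sq_sqrt (hx j)]
      ring
    rw [hQrow i] at hCS
    calc ∑ j, Q i j * Real.sqrt (x j)
        = Real.sqrt ((∑ j, Q i j * Real.sqrt (x j)) ^ 2) := (Real.sqrt_sq hL0).symm
      _ ≤ Real.sqrt ((1 - γ)⁻¹ * ∑ j, Q i j * x j) := Real.sqrt_le_sqrt hCS
      _ = (1 / Real.sqrt (1 - γ)) * Real.sqrt (Q.mulVec x i) := by
          rw [Real.sqrt_mul (by positivity) _, Real.sqrt_inv, one_div, hmv x i]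
  have habs : ‖Q.mulVec (fun s => Real.sqrt (x s)) i‖ = ∑ j, Q i j * Real.sqrt (x j) := by
    rw [Real.norm_eq_abs, hmv, abs_of_nonneg hL0]
  rw [habs]
  exact key.trans (mul_le_mul_of_nonneg_left (Real.sqrt_le_sqrt (hQx_le i)) (by positivity))
end

section
/- Let P be a row-stochastic matrix on a finite state space and β ∈ (0,1). Then for any vector x with nonnegative entries, ‖(I − βP)^{-1} x‖_∞ ≤ 2·‖(I − β²P)^{-1} x‖_∞. -/
section Aux

variable {S : Type*} [Fintype S] [DecidableEq S]

/-- A row-stochastic matrix is a contraction for the sup norm. -/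
lemma stoch_mulVec_norm_le (P : Matrix S S ℝ) (hP0 : ∀ s s', 0 ≤ P s s')
    (hP1 : ∀ s, ∑ s', P s s' = 1) (z : S → ℝ) : ‖P.mulVec z‖ ≤ ‖z‖ := by
  rw [pi_norm_le_iff_of_nonneg (norm_nonneg z)]
  intro s
  have : P.mulVec z s = ∑ s', P s s' * z s' := rfl
  rw [this, Real.norm_eq_abs]
  calc |∑ s', P s s' * z s'| ≤ ∑ s', |P s s' * z s'| := Finset.abs_sum_le_sum_abs _ _
    _ ≤ ∑ s', P s s' * ‖z‖ := by
        refine Finset.sum_le_sum fun s' _ => ?_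
        rw [abs_mul, abs_of_nonneg (hP0 s s')]
        exact mul_le_mul_of_nonneg_left
          (by simpa using norm_le_pi_norm z s') (hP0 s s')
    _ = ‖z‖ := by rw [← Finset.sum_mul, hP1, one_mul]

lemma isUnit_one_sub_smul (P : Matrix S S ℝ) (c : ℝ) (hc : |c| < 1)
    (hP : ∀ z : S → ℝ, ‖P.mulVec z‖ ≤ ‖z‖) : IsUnit (1 - c • P) := by
  rw [Matrix.isUnit_iff_isUnit_det, isUnit_iff_ne_zero]
  intro hdet
  obtain ⟨v, hv, hAv⟩ := Matrix.exists_mulVec_eq_zero_iff.2 hdet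
  rw [Matrix.sub_mulVec, Matrix.one_mulVec, sub_eq_zero] at hAv
  have h1 : ‖v‖ ≤ |c| * ‖v‖ := by
    calc ‖v‖ = ‖(c • P).mulVec v‖ := by rw [← hAv]
      _ = |c| * ‖P.mulVec v‖ := by
          rw [Matrix.smul_mulVec, norm_smul, Real.norm_eq_abs]
      _ ≤ |c| * ‖v‖ := mul_le_mul_of_nonneg_left (hP v) (abs_nonneg c)
  have hv' : 0 < ‖v‖ := norm_pos_iff.2 hv
  nlinarith

lemma inv_mulVec_norm_le (P : Matrix S S ℝ) (c : ℝ) (hc0 : 0 ≤ c) (hc : c < 1)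
    (hP : ∀ z : S → ℝ, ‖P.mulVec z‖ ≤ ‖z‖) (hU : IsUnit (1 - c • P)) (y : S → ℝ) :
    ‖((1 - c • P)⁻¹).mulVec y‖ ≤ ‖y‖ / (1 - c) := by
  set z := ((1 - c • P)⁻¹).mulVec y with hzdef
  have hz : (1 - c • P).mulVec z = y := by
    rw [hzdef, Matrix.mulVec_mulVec,
      Matrix.mul_nonsing_inv _ ((Matrix.isUnit_iff_isUnit_det _).1 hU),
      Matrix.one_mulVec]
  have hzy : z - c • P.mulVec z = y := by
    rw [← hz, Matrix.sub_mulVec, Matrix.one_mulVec, Matrix.smul_mulVec]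
  have h1 : ‖z‖ - c * ‖z‖ ≤ ‖y‖ := by
    have h2 : ‖z‖ - ‖c • P.mulVec z‖ ≤ ‖z - c • P.mulVec z‖ := norm_sub_norm_le _ _
    rw [hzy, norm_smul, Real.norm_eq_abs, abs_of_nonneg hc0] at h2
    have h3 : c * ‖P.mulVec z‖ ≤ c * ‖z‖ := mul_le_mul_of_nonneg_left (hP z) hc0
    linarith
  rw [le_div_iff₀ (by linarith : (0:ℝ) < 1 - c)]
  nlinarith

end Aux

/-- For a row-stochastic `P`, `β ∈ (0,1)` and nonnegative `x`,
`‖(I − βP)⁻¹ x‖_∞ ≤ 2·‖(I − β²P)⁻¹ x‖_∞`. -/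
theorem resolvent_square_discount_compare {S : Type*} [Fintype S] [DecidableEq S]
    (P : Matrix S S ℝ) (β : ℝ) (x : S → ℝ)
    (hP0 : ∀ s s', 0 ≤ P s s') (hP1 : ∀ s, ∑ s', P s s' = 1)
    (hβ : β ∈ Set.Ioo (0 : ℝ) 1) (hx : ∀ s, 0 ≤ x s) :
    ‖((1 - β • P)⁻¹).mulVec x‖ ≤ 2 * ‖((1 - β ^ 2 • P)⁻¹).mulVec x‖ := by
  obtain ⟨hβ0, hβ1⟩ := hβ
  have hP : ∀ z : S → ℝ, ‖P.mulVec z‖ ≤ ‖z‖ := stoch_mulVec_norm_le P hP0 hP1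
  have hA : IsUnit (1 - β • P) :=
    isUnit_one_sub_smul P β (by rw [abs_of_pos hβ0]; exact hβ1) hP
  have hB : IsUnit (1 - β ^ 2 • P) :=
    isUnit_one_sub_smul P (β ^ 2)
      (by rw [abs_of_pos (by positivity)]; nlinarith) hP
  set v := ((1 - β ^ 2 • P)⁻¹).mulVec x with hvdef
  have hxv : x = (1 - β ^ 2 • P).mulVec v := by
    rw [hvdef, Matrix.mulVec_mulVec,
      Matrix.mul_nonsing_inv _ ((Matrix.isUnit_iff_isUnit_det _).1 hB),
      Matrix.one_mulVec]
  have hsplit : (1 - β ^ 2 • P : Matrix S S ℝ)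
      = (1 - β • P) + (β - β ^ 2) • P := by
    rw [sub_smul]; ring_nf
    abel
  have key : ((1 - β • P)⁻¹).mulVec x
      = v + (β - β ^ 2) • ((1 - β • P)⁻¹).mulVec (P.mulVec v) := by
    calc ((1 - β • P)⁻¹).mulVec x
        = ((1 - β • P)⁻¹).mulVec (((1 - β • P) + (β - β ^ 2) • P).mulVec v) := by
          rw [← hsplit, ← hxv]
      _ = ((1 - β • P)⁻¹ * ((1 - β • P) + (β - β ^ 2) • P)).mulVec v := by
          rw [Matrix.mulVec_mulVec]
      _ = (1 + (β - β ^ 2) • ((1 - β • P)⁻¹ * P)).mulVec v := by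
          rw [mul_add, Matrix.nonsing_inv_mul _ ((Matrix.isUnit_iff_isUnit_det _).1 hA),
            Matrix.mul_smul]
      _ = v + (β - β ^ 2) • ((1 - β • P)⁻¹).mulVec (P.mulVec v) := by
          rw [Matrix.add_mulVec, Matrix.one_mulVec, Matrix.smul_mulVec,
            ← Matrix.mulVec_mulVec]
  rw [key]
  have hββ : 0 ≤ β - β ^ 2 := by nlinarith
  have hbound : ‖((1 - β • P)⁻¹).mulVec (P.mulVec v)‖ ≤ ‖P.mulVec v‖ / (1 - β) :=
    inv_mulVec_norm_le P β (le_of_lt hβ0) hβ1 hP hA _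
  have hPv : ‖P.mulVec v‖ ≤ ‖v‖ := hP v
  have h1β : (0:ℝ) < 1 - β := by linarith
  calc ‖v + (β - β ^ 2) • ((1 - β • P)⁻¹).mulVec (P.mulVec v)‖
      ≤ ‖v‖ + ‖(β - β ^ 2) • ((1 - β • P)⁻¹).mulVec (P.mulVec v)‖ := norm_add_le _ _
    _ = ‖v‖ + (β - β ^ 2) * ‖((1 - β • P)⁻¹).mulVec (P.mulVec v)‖ := by
        rw [norm_smul, Real.norm_eq_abs, abs_of_nonneg hββ]
    _ ≤ ‖v‖ + (β - β ^ 2) * (‖v‖ / (1 - β)) := by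
        refine add_le_add_right (mul_le_mul_of_nonneg_left (hbound.trans ?_) hββ) _
        gcongr
    _ = ‖v‖ + β * ‖v‖ := by
        rw [mul_div_assoc']
        congr 1
        field_simp
    _ ≤ 2 * ‖v‖ := by nlinarith [norm_nonneg v]
end
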